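/- Let q ≥ 5 and r = 3. The two-element set σ = {2e_1 + e_2, e_3 + e_4 + e_5} (corresponding to the monomials ε_1²ε_2 and ε_3ε_4ε_5) is a Scarf face of E_q^3, yet σ is not contained in any set aU with a ∈ ℕ^q and |a| ≤ 3 (indeed |a_1 − b_1| = 2 for its two elements a, b). Hence for q ≥ 5 the Scarf complex of E_q^3 strictly contains the complex U^3_q. -/

import Mathlib

open Finset

/-- The exponent of the variable `x_A` in `lcm(ε^a : a ∈ σ)`:
`eLabel σ A = max_{a ∈ σ} ∑_{i ∈ A} a i` (and `0` if `σ = ∅`). -/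
def eLabel {q : ℕ} (σ : Finset (Fin q → ℕ)) (A : Finset (Fin q)) : ℕ :=
  σ.sup (fun a => ∑ i ∈ A, a i)

/-- `σ` is a face of the Scarf complex of `E_q^r`: a nonempty subset of
`N^r_q` such that every nonempty `τ ⊆ N^r_q` with the same label equals `σ`. -/
def IsScarf (q r : ℕ) (σ : Finset (Fin q → ℕ)) : Prop :=
  σ.Nonempty ∧ (∀ a ∈ σ, ∑ i, a i = r) ∧
    ∀ τ : Finset (Fin q → ℕ), τ.Nonempty → (∀ a ∈ τ, ∑ i, a i = r) →
      (∀ A : Finset (Fin q), A.Nonempty → eLabel τ A = eLabel σ A) → τ = σ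

/-- The set `aU = {c ∈ N^r_q : a i ≤ c i ≤ a i + 1 for all i}`, i.e. the
vertex set of the face `ε^a · U_q^{r-|a|}` of the Taylor complex of `E_q^r`. -/
def aUF (q r : ℕ) (a : Fin q → ℕ) : Finset (Fin q → ℕ) :=
  (Finset.Icc a (a + 1)).filter (fun c => ∑ i, c i = r)

/-- The vector `2e_1 + e_2` (0-indexed: value 2 at index 0, 1 at index 1). -/
def vA (q : ℕ) : Fin q → ℕ :=
  fun i => if i.val = 0 then 2 else if i.val = 1 then 1 else 0

/-- The vector `e_3 + e_4 + e_5` (0-indexed: value 1 at indices 2, 3, 4). -/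
def vB (q : ℕ) : Fin q → ℕ :=
  fun i => if i.val = 2 ∨ i.val = 3 ∨ i.val = 4 then 1 else 0

/-! Write `a = 2e₁ + e₂` and `b = e₃ + e₄ + e₅`. If `τ` has the label of `{a, b}`, every
`c ∈ τ` satisfies `∑_{i ∈ A} c_i ≤ max(∑_A a, ∑_A b)` for all `A`. This kills the coordinates
beyond the fifth, and on the first five the bounds at `{2, j}` and `{1, j, k}` (`j, k ∈ {3, 4, 5}`)
leave only `c = a` and `c = b` among vectors of degree 3. Conversely `a` and `b` are the only
elements of `{a, b}` attaining the label at `{1}` and `{3}`, so both lie in `τ`. Finally, two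
elements of a set `cU` differ by at most one in each coordinate, while `a₁ - b₁ = 2`. -/

theorem eLabel_pair {q : ℕ} (a b : Fin q → ℕ) (A : Finset (Fin q)) :
    eLabel {a, b} A = max (∑ i ∈ A, a i) (∑ i ∈ A, b i) := by
  simp [eLabel]

theorem sum_le_eLabel_of_eLabel_eq {q : ℕ} {σ τ : Finset (Fin q → ℕ)}
    (hL : ∀ A : Finset (Fin q), A.Nonempty → eLabel τ A = eLabel σ A)
    {c : Fin q → ℕ} (hc : c ∈ τ) (A : Finset (Fin q)) :
    ∑ i ∈ A, c i ≤ eLabel σ A := by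
  rcases A.eq_empty_or_nonempty with rfl | hA
  · simp
  · exact hL A hA ▸ Finset.le_sup (f := fun a => ∑ i ∈ A, a i) hc

theorem isScarf_of_forall_sum_le_eLabel {q r : ℕ} {σ : Finset (Fin q → ℕ)} (hne : σ.Nonempty)
    (hσ : ∀ a ∈ σ, ∑ i, a i = r)
    (hmem : ∀ c : Fin q → ℕ, ∑ i, c i = r → (∀ A, ∑ i ∈ A, c i ≤ eLabel σ A) → c ∈ σ)
    (hsep : ∀ a ∈ σ, ∃ A : Finset (Fin q), A.Nonempty ∧
      ∀ b ∈ σ, b ≠ a → ∑ i ∈ A, b i < ∑ i ∈ A, a i) :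
    IsScarf q r σ := by
  refine ⟨hne, hσ, fun τ hτ hτr hL => ?_⟩
  have hsub : τ ⊆ σ := fun c hc => hmem c (hτr c hc) (sum_le_eLabel_of_eLabel_eq hL hc)
  refine hsub.antisymm fun a ha => ?_
  obtain ⟨A, hA, hlt⟩ := hsep a ha
  obtain ⟨c, hcτ, hc⟩ := Finset.exists_mem_eq_sup τ hτ (fun b => ∑ i ∈ A, b i)
  by_contra haτ
  have hac : ∑ i ∈ A, a i ≤ ∑ i ∈ A, c i := by
    rw [← hc, ← eLabel, hL A hA]
    exact Finset.le_sup (f := fun b => ∑ i ∈ A, b i) ha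
  exact (hlt c (hsub hcτ) (by rintro rfl; exact haτ hcτ)).not_ge hac

theorem le_add_one_of_mem_aUF {q r : ℕ} {c a b : Fin q → ℕ} (ha : a ∈ aUF q r c)
    (hb : b ∈ aUF q r c) (i : Fin q) : a i ≤ b i + 1 := by
  simp only [aUF, Finset.mem_filter, Finset.mem_Icc] at ha hb
  exact (ha.1.2 i).trans (Nat.add_le_add_right (hb.1.1 i) 1)

theorem Fin.sum_univ_eq_sum_castLE {M : Type*} [AddCommMonoid M] {n q : ℕ} (h : n ≤ q)
    {f : Fin q → M} (hf : ∀ i : Fin q, n ≤ i.val → f i = 0) :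
    ∑ i, f i = ∑ k : Fin n, f (Fin.castLE h k) := by
  rw [← Finset.sum_subset (Finset.subset_univ (Finset.univ.map (Fin.castLEEmb h))),
    Finset.sum_map]
  · rfl
  · intro i _ hi
    refine hf i (not_lt.1 fun hlt => hi ?_)
    exact Finset.mem_map.2 ⟨⟨i, hlt⟩, Finset.mem_univ _, rfl⟩

theorem Fin.funext_of_castLE {M : Type*} [Zero M] {n q : ℕ} (h : n ≤ q) {f g : Fin q → M}
    (hf : ∀ i : Fin q, n ≤ i.val → f i = 0) (hg : ∀ i : Fin q, n ≤ i.val → g i = 0)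
    (hfg : f ∘ Fin.castLE h = g ∘ Fin.castLE h) : f = g := by
  funext i
  by_cases hi : i.val < n
  · exact congrFun hfg ⟨i, hi⟩
  · rw [hf i (not_lt.1 hi), hg i (not_lt.1 hi)]

theorem vA_castLE {n q : ℕ} (h : n ≤ q) (i : Fin n) : vA q (Fin.castLE h i) = vA n i := rfl

theorem vB_castLE {n q : ℕ} (h : n ≤ q) (i : Fin n) : vB q (Fin.castLE h i) = vB n i := rfl

theorem vA_eq_zero {q : ℕ} {i : Fin q} (hi : 2 ≤ i.val) : vA q i = 0 := by
  simp only [vA]; split_ifs <;> omega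

theorem vB_eq_zero {q : ℕ} {i : Fin q} (hi : 5 ≤ i.val) : vB q i = 0 := by
  simp only [vB]; split_ifs <;> omega

theorem eq_vA_or_eq_vB_of_sum_le_max_five (c : Fin 5 → ℕ) (hc : ∑ i, c i = 3)
    (h : ∀ A : Finset (Fin 5), ∑ i ∈ A, c i ≤ max (∑ i ∈ A, vA 5 i) (∑ i ∈ A, vB 5 i)) :
    c = vA 5 ∨ c = vB 5 := by
  have h12 := (h {1, 2}).trans_eq (by decide : _ = 1)
  have h13 := (h {1, 3}).trans_eq (by decide : _ = 1)
  have h14 := (h {1, 4}).trans_eq (by decide : _ = 1)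
  have h023 := (h {0, 2, 3}).trans_eq (by decide : _ = 2)
  have h024 := (h {0, 2, 4}).trans_eq (by decide : _ = 2)
  have h034 := (h {0, 3, 4}).trans_eq (by decide : _ = 2)
  simp only [Fin.sum_univ_five, Fin.isValue, Finset.mem_singleton, Fin.reduceEq,
    not_false_eq_true, Finset.sum_insert, Finset.sum_singleton, Finset.mem_insert, or_self]
    at hc h12 h13 h14 h023 h024 h034
  have hcases : (c 0 = 2 ∧ c 1 = 1 ∧ c 2 = 0 ∧ c 3 = 0 ∧ c 4 = 0) ∨
      (c 0 = 0 ∧ c 1 = 0 ∧ c 2 = 1 ∧ c 3 = 1 ∧ c 4 = 1) := by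
    omega
  rcases hcases with ⟨h0, h1, h2, h3, h4⟩ | ⟨h0, h1, h2, h3, h4⟩
  · left; funext i; fin_cases i <;> simp [vA, *]
  · right; funext i; fin_cases i <;> simp [vB, *]

theorem eq_vA_or_eq_vB_of_sum_le_eLabel {q : ℕ} (hq : 5 ≤ q) {c : Fin q → ℕ}
    (hc : ∑ i, c i = 3) (h : ∀ A, ∑ i ∈ A, c i ≤ eLabel {vA q, vB q} A) :
    c = vA q ∨ c = vB q := by
  have hvA0 : ∀ i : Fin q, 5 ≤ i.val → vA q i = 0 := fun i hi => vA_eq_zero (by omega)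
  have hvB0 : ∀ i : Fin q, 5 ≤ i.val → vB q i = 0 := fun i hi => vB_eq_zero hi
  have hc0 : ∀ i : Fin q, 5 ≤ i.val → c i = 0 := fun i hi => by
    simpa [eLabel_pair, hvA0 i hi, hvB0 i hi] using h {i}
  have h5 : c ∘ Fin.castLE hq = vA 5 ∨ c ∘ Fin.castLE hq = vB 5 := by
    refine eq_vA_or_eq_vB_of_sum_le_max_five _ ?_ fun A => ?_
    · rw [← hc, Fin.sum_univ_eq_sum_castLE hq hc0]; rfl
    · simpa [eLabel_pair, vA_castLE, vB_castLE] using h (A.map (Fin.castLEEmb hq))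
  exact h5.imp (Fin.funext_of_castLE hq hc0 hvA0) (Fin.funext_of_castLE hq hc0 hvB0)

theorem sum_vA {q : ℕ} (hq : 5 ≤ q) : ∑ i, vA q i = 3 := by
  rw [Fin.sum_univ_eq_sum_castLE hq fun _ hi => vA_eq_zero (by omega)]
  rfl

theorem sum_vB {q : ℕ} (hq : 5 ≤ q) : ∑ i, vB q i = 3 := by
  rw [Fin.sum_univ_eq_sum_castLE hq fun _ => vB_eq_zero]
  rfl

/-- Remark (r:q>4): for `q ≥ 5`, the set `{2e_1 + e_2, e_3 + e_4 + e_5}`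
(corresponding to `{ε_1²ε_2, ε_3ε_4ε_5}`) is a Scarf face of `E_q^3` that is
not contained in any set `aU` with `|a| ≤ 3`; hence the Scarf complex of
`E_q^3` strictly contains `U^3_q`. -/
theorem stmt15 (q : ℕ) (hq : 5 ≤ q) :
    IsScarf q 3 {vA q, vB q} ∧
    ∀ c : Fin q → ℕ, ∑ i, c i ≤ 3 →
      ¬ ({vA q, vB q} : Finset (Fin q → ℕ)) ⊆ aUF q 3 c := by
  have hvAB : vA q ≠ vB q := fun h => by simpa [vA, vB] using congrFun h ⟨0, by omega⟩
  refine ⟨isScarf_of_forall_sum_le_eLabel (Finset.insert_nonempty _ _) ?_ ?_ ?_, ?_⟩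
  · simp [sum_vA hq, sum_vB hq]
  · intro c hc h
    rcases eq_vA_or_eq_vB_of_sum_le_eLabel hq hc h with rfl | rfl <;> simp
  · simp only [Finset.mem_insert, Finset.mem_singleton, forall_eq_or_imp, forall_eq]
    refine ⟨⟨{⟨0, by omega⟩}, Finset.singleton_nonempty _, ?_⟩,
      ⟨{⟨2, by omega⟩}, Finset.singleton_nonempty _, ?_⟩⟩
    all_goals simp only [Finset.sum_singleton]
    · simp [hvAB.symm, vA, vB]
    · simp [hvAB, vA, vB]
  · intro c _ hsub
    have h0 := le_add_one_of_mem_aUF (hsub (Finset.mem_insert_self _ _))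
      (hsub (Finset.mem_insert_of_mem (Finset.mem_singleton_self _))) ⟨0, by omega⟩
    simp [vA, vB] at h0
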